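/- Assume the Slater condition: there exist ζ > 0 and p̄ ∈ D̃(γ, q) such that |K|·T_s·(γ^c_i + ζ) ≤ Σ_{k∈N(i)} Σ_τ r_{ki}·p̄^c_{ki}(τ) − B^c_i(Γ^c_i, p̄) for all (i,c) ∈ S. Let γ' = (γ'^c_i) satisfy γ'^c_i ≤ γ^c_i for all (i,c) ∈ S, let p' be any maximizer of h over D̃(γ', q), and let p^MDP be any maximizer of h over D̃(γ, q). Then h(p') − h(p^MDP) ≤ K₃ · Σ_{(i,c)∈S} |γ'^c_i − γ^c_i|, where K₃ = ‖Q‖_∞·|K|·T_s/ζ + V·(f_max − f_min)/ζ. -/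

import Mathlib

/-!
Write `Δ = Σ_{(i,c)∈S} |γ'^c_i − γ^c_i|` and mix the relaxed maximizer `p'` with the Slater
point `p̄` in the ratio `t = Δ/(Δ + ζ)`. Every constraint of `D̃` is convex in `(γ, p)`: (P1),
(P2) and the box are linear, and the QoS constraint is linear minus the protection term `B`,
which is convex in `p` as a maximum of sums of the convex functions `p̂_a = max{θ_a, 1 − θ_a}`.
So the mixture lies in `D̃((1 − t)γ' + t(γ + ζ), q) ⊆ D̃(γ, q)`, the slack `tζ` of `p̄` covering
the deficit `(1 − t)Δ` of `p'`. Concavity of `h` and maximality of `p^MDP` give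
`h(p') − h(p^MDP) ≤ t (h(p') − h(p̄))`, and (P1) fixes the total scheduled mass at `|K| T_s`, so
`h(p') − h(p̄) ≤ ‖Q‖_∞ |K| T_s + V (f_max − f_min)`; finally `t ≤ Δ/ζ`.
-/

open Finset
open scoped Classical

noncomputable section

/-- For `θ : A → [0,1]`, `p̂_a = max{θ_a, 1 − θ_a}`. -/
def phat {ι : Type*} (θ : ι → ℝ) (a : ι) : ℝ :=
  max (θ a) (1 - θ a)

/-- Protection term `B(Γ, θ)`: the maximum over pairs `(S₀, a₀)` with
`S₀ ⊆ A`, `|S₀| = ⌊Γ⌋`, `a₀ ∈ A \ S₀`, of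
`Σ_{a∈S₀} p̂_a + (Γ − ⌊Γ⌋)·p̂_{a₀}`. -/
def protB {ι : Type*} [Fintype ι] (Γ : ℝ) (θ : ι → ℝ) : ℝ :=
  sSup {x : ℝ | ∃ (S : Finset ι) (a₀ : ι), S.card = Nat.floor Γ ∧ a₀ ∉ S ∧
    x = (∑ a ∈ S, phat θ a) + (Γ - (Nat.floor Γ : ℝ)) * phat θ a₀}

/-- Upper tail `P(Σ_a y_a > m)` of a Poisson Binomial sum of independent
Bernoulli variables with success probabilities `θ_a`. -/
def pbTail {ι : Type*} [Fintype ι] [DecidableEq ι] (θ : ι → ℝ) (m : ℝ) : ℝ :=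
  ∑ T ∈ Finset.univ.powerset.filter (fun T : Finset ι => m < (T.card : ℝ)),
    (∏ a ∈ T, θ a) * ∏ a ∈ Tᶜ, (1 - θ a)

/-- The box constraint `p ∈ [0,1]^{T_s·|E|·|C|}`. -/
def inBox {K I C : Type*} (Ts : ℕ) (p : K → I → C → Fin Ts → ℝ) : Prop :=
  ∀ k i c τ, p k i c τ ∈ Set.Icc (0 : ℝ) 1

/-- Constraint (P1): each provider `k` serves exactly one (client, job type)
pair per slot, `Σ_{c∈C} Σ_{i∈N(k)} p^c_{ki}(τ) = 1`, where
`N(k) = {i : k ∈ N(i)}`. -/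
def consP1 {K I C : Type*} [Fintype K] [Fintype I] [Fintype C]
    (N : I → Finset K) {Ts : ℕ} (p : K → I → C → Fin Ts → ℝ) : Prop :=
  ∀ (k : K) (τ : Fin Ts),
    (∑ c, ∑ i ∈ Finset.univ.filter (fun i => k ∈ N i), p k i c τ) = 1

/-- Constraint (P2): the transmission-rate constraint
`Σ_{c∈C} Σ_{k∈N(i)} p^c_{ki}(τ) ≤ U_i`. -/
def consP2 {K I C : Type*} [Fintype C]
    (N : I → Finset K) (U : I → ℝ) {Ts : ℕ} (p : K → I → C → Fin Ts → ℝ) : Prop :=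
  ∀ (i : I) (τ : Fin Ts), (∑ c, ∑ k ∈ N i, p k i c τ) ≤ U i

/-- `Γ^c_i = sqrt(2·|K|·T_s·log(1/(1 − q^c_i)))`. -/
def GamQoS (nK Ts : ℕ) (qic : ℝ) : ℝ :=
  Real.sqrt (2 * (nK : ℝ) * (Ts : ℝ) * Real.log (1 / (1 - qic)))

/-- The Bernoulli success probabilities `θ_{(k,τ)} = r_{ki}·p^c_{ki}(τ)` on the
index set `A = N(i) × {0,…,T_s−1}`. -/
def thetaOf {K I C : Type*} (N : I → Finset K) {Ts : ℕ} (r : K → I → ℝ)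
    (p : K → I → C → Fin Ts → ℝ) (i : I) (c : C) :
    {k // k ∈ N i} × Fin Ts → ℝ :=
  fun kt => r kt.1.1 i * p kt.1.1 i c kt.2

/-- The protection term `B^c_i(Γ^c_i, p)` of client `i`, job type `c`. -/
def Bci {K I C : Type*} [Fintype K] [DecidableEq K] (N : I → Finset K)
    {Ts : ℕ} (r : K → I → ℝ) (q : I → C → ℝ)
    (p : K → I → C → Fin Ts → ℝ) (i : I) (c : C) : ℝ :=
  protB (GamQoS (Fintype.card K) Ts (q i c)) (thetaOf N r p i c)

/-- The linearized feasible domain `D̃(γ, q)`: box, (P1), (P2), and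
`|K|·T_s·γ^c_i ≤ Σ_{k∈N(i)} Σ_τ r_{ki}·p^c_{ki}(τ) − B^c_i(Γ^c_i, p)` for
every `(i,c)` with `q^c_i > 0`. -/
def Dtilde {K I C : Type*} [Fintype K] [Fintype I] [Fintype C] [DecidableEq K]
    (N : I → Finset K) (Ts : ℕ) (r : K → I → ℝ) (U : I → ℝ)
    (γ q : I → C → ℝ) : Set (K → I → C → Fin Ts → ℝ) :=
  {p | inBox Ts p ∧ consP1 N p ∧ consP2 N U p ∧
    ∀ i c, 0 < q i c →
      (Fintype.card K : ℝ) * Ts * γ i c ≤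
        (∑ k ∈ N i, ∑ τ : Fin Ts, r k i * p k i c τ) - Bci N r q p i c}

/-- The feasible domain `D(γ, q)`: box, (P1), (P2), and the probabilistic QoS
constraint `P(μ^c_i > |K|·T_s·γ^c_i) ≥ q^c_i` for every `(i,c)` with
`q^c_i > 0`, where `μ^c_i` is the Poisson Binomial service. -/
def Dset {K I C : Type*} [Fintype K] [Fintype I] [Fintype C] [DecidableEq K]
    (N : I → Finset K) (Ts : ℕ) (r : K → I → ℝ) (U : I → ℝ)
    (γ q : I → C → ℝ) : Set (K → I → C → Fin Ts → ℝ) :=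
  {p | inBox Ts p ∧ consP1 N p ∧ consP2 N U p ∧
    ∀ i c, 0 < q i c →
      q i c ≤ pbTail (thetaOf N r p i c) ((Fintype.card K : ℝ) * Ts * γ i c)}

/-- The drift-plus-penalty objective
`h(p) = Σ_{i,c} Q^c_i·(Σ_τ Σ_{k∈N(i)} r_{ki}·p^c_{ki}(τ)) + V·f(p)`. -/
def hobj {K I C : Type*} [Fintype I] [Fintype C] (N : I → Finset K) {Ts : ℕ}
    (r : K → I → ℝ) (Q : I → C → ℝ) (V : ℝ)
    (f : (K → I → C → Fin Ts → ℝ) → ℝ) (p : K → I → C → Fin Ts → ℝ) : ℝ :=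
  (∑ i, ∑ c, Q i c * (∑ τ : Fin Ts, ∑ k ∈ N i, r k i * p k i c τ)) + V * f p

theorem sub_le_sum_ite_abs {α : Type*} [Fintype α] {P : α → Prop} [DecidablePred P]
    (x y : α → ℝ) {a : α} (ha : P a) : y a - x a ≤ ∑ b, if P b then |x b - y b| else 0 :=
  calc y a - x a ≤ |x a - y a| := (le_abs_self _).trans_eq (abs_sub_comm _ _)
    _ = if P a then |x a - y a| else 0 := (if_pos ha).symm
    _ ≤ ∑ b, if P b then |x b - y b| else 0 :=
      single_le_sum (f := fun b => if P b then |x b - y b| else 0)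
        (fun b _ => by positivity) (mem_univ a)

theorem convexOn_sSup_image_of_finite {J E : Type*} [Finite J] [AddCommMonoid E] [Module ℝ E]
    {s : Set E} (hs : Convex ℝ s) {g : J → E → ℝ} (hg : ∀ j, ConvexOn ℝ s (g j)) (A : Set J) :
    ConvexOn ℝ s fun x => sSup ((fun j => g j x) '' A) := by
  refine ⟨hs, fun x hx y hy a b ha hb hab => ?_⟩
  rcases A.eq_empty_or_nonempty with rfl | hA
  · simp
  refine csSup_le (hA.image _) ?_
  rintro _ ⟨j, hj, rfl⟩
  have hbdd : ∀ z, BddAbove ((fun j => g j z) '' A) := fun z => (A.toFinite.image _).bddAbove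
  calc g j (a • x + b • y) ≤ a • g j x + b • g j y := (hg j).2 hx hy ha hb hab
    _ ≤ a • sSup ((fun j => g j x) '' A) + b • sSup ((fun j => g j y) '' A) := by
      gcongr
      · exact le_csSup (hbdd x) ⟨j, hj, rfl⟩
      · exact le_csSup (hbdd y) ⟨j, hj, rfl⟩

section ProtectionTerm

variable {ι : Type*}

theorem convexOn_phat (a : ι) : ConvexOn ℝ Set.univ fun θ : ι → ℝ => phat θ a :=
  ((LinearMap.proj a).convexOn convex_univ).sup
    ((convexOn_const 1 convex_univ).sub ((LinearMap.proj a).concaveOn convex_univ))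

def protTerm (Γ : ℝ) (θ : ι → ℝ) (S : Finset ι) (a₀ : ι) : ℝ :=
  ∑ a ∈ S, phat θ a + (Γ - ⌊Γ⌋₊) * phat θ a₀

theorem convexOn_protTerm {Γ : ℝ} (hΓ : 0 ≤ Γ) (S : Finset ι) (a₀ : ι) :
    ConvexOn ℝ Set.univ fun θ : ι → ℝ => protTerm Γ θ S a₀ := by
  refine ⟨convex_univ, fun θ₁ _ θ₂ _ a b ha hb hab => ?_⟩
  have hphat := fun x : ι => (convexOn_phat x).2 (Set.mem_univ θ₁) (Set.mem_univ θ₂) ha hb hab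
  simp only [smul_eq_mul] at hphat ⊢
  have hsum : ∑ x ∈ S, phat (a • θ₁ + b • θ₂) x
      ≤ a * ∑ x ∈ S, phat θ₁ x + b * ∑ x ∈ S, phat θ₂ x := by
    rw [mul_sum, mul_sum, ← sum_add_distrib]
    exact sum_le_sum fun x _ => hphat x
  have hfrac : 0 ≤ Γ - ⌊Γ⌋₊ := sub_nonneg.2 (Nat.floor_le hΓ)
  have htail := mul_le_mul_of_nonneg_left (hphat a₀) hfrac
  unfold protTerm
  linarith

theorem protB_eq_sSup_image [Fintype ι] (Γ : ℝ) (θ : ι → ℝ) :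
    protB Γ θ = sSup ((fun Sa : Finset ι × ι => protTerm Γ θ Sa.1 Sa.2) ''
      {Sa | Sa.1.card = ⌊Γ⌋₊ ∧ Sa.2 ∉ Sa.1}) := by
  unfold protB protTerm
  congr 1
  ext x
  constructor
  · rintro ⟨S, a₀, hS, ha₀, rfl⟩
    exact ⟨(S, a₀), ⟨hS, ha₀⟩, rfl⟩
  · rintro ⟨⟨S, a₀⟩, ⟨hS, ha₀⟩, rfl⟩
    exact ⟨S, a₀, hS, ha₀, rfl⟩

theorem convexOn_protB [Fintype ι] {Γ : ℝ} (hΓ : 0 ≤ Γ) :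
    ConvexOn ℝ Set.univ (protB Γ : (ι → ℝ) → ℝ) := by
  rw [show protB Γ = _ from funext (protB_eq_sSup_image Γ)]
  exact convexOn_sSup_image_of_finite convex_univ
    (fun Sa : Finset ι × ι => convexOn_protTerm hΓ Sa.1 Sa.2) _

end ProtectionTerm

section Network

variable {K I C : Type*} {Ts : ℕ}

theorem convex_inBox : Convex ℝ {p : K → I → C → Fin Ts → ℝ | inBox Ts p} :=
  fun _ hp _ hp' _ _ ha hb hab k i c τ =>
    convex_Icc (0 : ℝ) 1 (hp k i c τ) (hp' k i c τ) ha hb hab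

theorem consP1.convex_combo [Fintype K] [Fintype I] [Fintype C] {N : I → Finset K}
    {p₁ p₂ : K → I → C → Fin Ts → ℝ} (h₁ : consP1 N p₁) (h₂ : consP1 N p₂) {a b : ℝ}
    (hab : a + b = 1) : consP1 N (a • p₁ + b • p₂) := by
  intro k τ
  simp only [Pi.add_apply, Pi.smul_apply, smul_eq_mul, sum_add_distrib, ← mul_sum, h₁ k τ,
    h₂ k τ]
  linarith

theorem consP2.convex_combo [Fintype C] {N : I → Finset K} {U : I → ℝ}
    {p₁ p₂ : K → I → C → Fin Ts → ℝ} (h₁ : consP2 N U p₁) (h₂ : consP2 N U p₂) {a b : ℝ}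
    (ha : 0 ≤ a) (hb : 0 ≤ b) (hab : a + b = 1) : consP2 N U (a • p₁ + b • p₂) := by
  intro i τ
  simp only [Pi.add_apply, Pi.smul_apply, smul_eq_mul, sum_add_distrib, ← mul_sum]
  calc a * ∑ c, ∑ k ∈ N i, p₁ k i c τ + b * ∑ c, ∑ k ∈ N i, p₂ k i c τ ≤ a * U i + b * U i := by
        gcongr
        exacts [h₁ i τ, h₂ i τ]
    _ = U i := by rw [← add_mul, hab, one_mul]

theorem thetaOf_convex_combo (N : I → Finset K) (r : K → I → ℝ)
    (p₁ p₂ : K → I → C → Fin Ts → ℝ) (a b : ℝ) (i : I) (c : C) :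
    thetaOf N r (a • p₁ + b • p₂) i c = a • thetaOf N r p₁ i c + b • thetaOf N r p₂ i c := by
  funext kt
  simp only [thetaOf, Pi.add_apply, Pi.smul_apply, smul_eq_mul]
  ring

theorem service_convex_combo (N : I → Finset K) (r : K → I → ℝ)
    (p₁ p₂ : K → I → C → Fin Ts → ℝ) (a b : ℝ) (i : I) (c : C) :
    ∑ k ∈ N i, ∑ τ, r k i * (a • p₁ + b • p₂) k i c τ
      = a * ∑ k ∈ N i, ∑ τ, r k i * p₁ k i c τ + b * ∑ k ∈ N i, ∑ τ, r k i * p₂ k i c τ := by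
  rw [mul_sum, mul_sum, ← sum_add_distrib]
  refine sum_congr rfl fun k _ => ?_
  rw [mul_sum, mul_sum, ← sum_add_distrib]
  refine sum_congr rfl fun τ _ => ?_
  simp only [Pi.add_apply, Pi.smul_apply, smul_eq_mul]
  ring

theorem Bci_convex_combo_le [Fintype K] [DecidableEq K] (N : I → Finset K) (r : K → I → ℝ)
    (q : I → C → ℝ) (p₁ p₂ : K → I → C → Fin Ts → ℝ) {a b : ℝ} (ha : 0 ≤ a) (hb : 0 ≤ b)
    (hab : a + b = 1) (i : I) (c : C) :
    Bci N r q (a • p₁ + b • p₂) i c ≤ a * Bci N r q p₁ i c + b * Bci N r q p₂ i c := by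
  unfold Bci
  rw [thetaOf_convex_combo]
  exact (convexOn_protB (Real.sqrt_nonneg _)).2 (Set.mem_univ _) (Set.mem_univ _) ha hb hab

theorem convex_combo_mem_Dtilde [Fintype K] [Fintype I] [Fintype C] [DecidableEq K]
    {N : I → Finset K} {r : K → I → ℝ} {U : I → ℝ} {γ₁ γ₂ q : I → C → ℝ}
    {p₁ p₂ : K → I → C → Fin Ts → ℝ} (h₁ : p₁ ∈ Dtilde N Ts r U γ₁ q)
    (h₂ : p₂ ∈ Dtilde N Ts r U γ₂ q) {a b : ℝ} (ha : 0 ≤ a) (hb : 0 ≤ b) (hab : a + b = 1) :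
    a • p₁ + b • p₂ ∈ Dtilde N Ts r U (a • γ₁ + b • γ₂) q := by
  obtain ⟨box₁, P1₁, P2₁, qos₁⟩ := h₁
  obtain ⟨box₂, P1₂, P2₂, qos₂⟩ := h₂
  refine ⟨convex_inBox box₁ box₂ ha hb hab, P1₁.convex_combo P1₂ hab,
    P2₁.convex_combo P2₂ ha hb hab, fun i c hq => ?_⟩
  have hB := Bci_convex_combo_le N r q p₁ p₂ ha hb hab i c
  have e₁ := mul_le_mul_of_nonneg_left (qos₁ i c hq) ha
  have e₂ := mul_le_mul_of_nonneg_left (qos₂ i c hq) hb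
  rw [service_convex_combo]
  simp only [Pi.add_apply, Pi.smul_apply, smul_eq_mul]
  linarith

theorem Dtilde_subset_Dtilde_of_le [Fintype K] [Fintype I] [Fintype C] [DecidableEq K]
    {N : I → Finset K} {r : K → I → ℝ} {U : I → ℝ} {γ₁ γ₂ q : I → C → ℝ}
    (hγ : ∀ i c, 0 < q i c → γ₁ i c ≤ γ₂ i c) :
    Dtilde N Ts r U γ₂ q ⊆ Dtilde N Ts r U γ₁ q :=
  fun _ ⟨box, P1, P2, qos⟩ => ⟨box, P1, P2, fun i c hq =>
    le_trans (by gcongr; exact hγ i c hq) (qos i c hq)⟩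

theorem convex_combo_mem_Dtilde_of_slack [Fintype K] [Fintype I] [Fintype C] [DecidableEq K]
    {N : I → Finset K} {r : K → I → ℝ} {U : I → ℝ} {γ γ' q : I → C → ℝ} {Δ ζ t : ℝ}
    (hdeficit : ∀ i c, 0 < q i c → γ i c - γ' i c ≤ Δ) (ht₀ : 0 ≤ t) (ht₁ : t ≤ 1)
    (hslack : t * (Δ + ζ) = Δ) {p' pbar : K → I → C → Fin Ts → ℝ}
    (hp' : p' ∈ Dtilde N Ts r U γ' q) (hpbar : pbar ∈ Dtilde N Ts r U (fun i c => γ i c + ζ) q) :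
    (1 - t) • p' + t • pbar ∈ Dtilde N Ts r U γ q := by
  refine Dtilde_subset_Dtilde_of_le (fun i c hq => ?_)
    (convex_combo_mem_Dtilde hp' hpbar (sub_nonneg.2 ht₁) ht₀ (sub_add_cancel 1 t))
  simp only [Pi.add_apply, Pi.smul_apply, smul_eq_mul]
  nlinarith [mul_le_mul_of_nonneg_left (hdeficit i c hq) (sub_nonneg.2 ht₁)]

def drift [Fintype I] [Fintype C] (N : I → Finset K) (r : K → I → ℝ) (Q : I → C → ℝ)
    (p : K → I → C → Fin Ts → ℝ) : ℝ :=
  ∑ i, ∑ c, Q i c * ∑ τ, ∑ k ∈ N i, r k i * p k i c τ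

theorem hobj_eq_drift_add [Fintype I] [Fintype C] (N : I → Finset K) (r : K → I → ℝ)
    (Q : I → C → ℝ) (V : ℝ) (f : (K → I → C → Fin Ts → ℝ) → ℝ) :
    hobj N r Q V f = fun p => drift N r Q p + V * f p :=
  rfl

theorem drift_convex_combo [Fintype I] [Fintype C] (N : I → Finset K) (r : K → I → ℝ)
    (Q : I → C → ℝ) (p₁ p₂ : K → I → C → Fin Ts → ℝ) (a b : ℝ) :
    drift N r Q (a • p₁ + b • p₂) = a * drift N r Q p₁ + b * drift N r Q p₂ := by
  simp only [drift, Pi.add_apply, Pi.smul_apply, smul_eq_mul, mul_add, sum_add_distrib,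
    mul_left_comm _ a, mul_left_comm _ b, ← mul_sum]

theorem concaveOn_hobj [Fintype I] [Fintype C] (N : I → Finset K) (r : K → I → ℝ)
    (Q : I → C → ℝ) {V : ℝ} (hV : 0 ≤ V) {f : (K → I → C → Fin Ts → ℝ) → ℝ}
    (hf : ConcaveOn ℝ {p | inBox Ts p} f) : ConcaveOn ℝ {p | inBox Ts p} (hobj N r Q V f) := by
  rw [hobj_eq_drift_add]
  exact ConcaveOn.add ⟨convex_inBox, fun p₁ _ p₂ _ a b _ _ _ =>
    (drift_convex_combo N r Q p₁ p₂ a b).ge⟩ (hf.smul hV)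

theorem consP1.sum_eq [Fintype K] [Fintype I] [Fintype C] {N : I → Finset K}
    {p : K → I → C → Fin Ts → ℝ} (hP1 : consP1 N p) :
    ∑ i, ∑ c, ∑ τ, ∑ k ∈ N i, p k i c τ = Fintype.card K * Ts := by
  have hP1' : ∀ k τ, ∑ i, ∑ c, (if k ∈ N i then p k i c τ else 0) = 1 := fun k τ => by
    rw [sum_comm, ← hP1 k τ]
    simp only [sum_filter]
  calc ∑ i, ∑ c, ∑ τ, ∑ k ∈ N i, p k i c τ
      = ∑ i, ∑ τ, ∑ c, ∑ k, (if k ∈ N i then p k i c τ else 0) := by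
        simp only [sum_ite_mem_eq]
        exact sum_congr rfl fun i _ => sum_comm
    _ = ∑ τ, ∑ i, ∑ k, ∑ c, (if k ∈ N i then p k i c τ else 0) := by
        rw [sum_comm]
        exact sum_congr rfl fun τ _ => sum_congr rfl fun i _ => sum_comm
    _ = ∑ τ : Fin Ts, ∑ k : K, (1 : ℝ) := by
        refine sum_congr rfl fun τ _ => ?_
        rw [sum_comm]
        exact sum_congr rfl fun k _ => hP1' k τ
    _ = Fintype.card K * Ts := by simp [mul_comm]

theorem drift_nonneg [Fintype I] [Fintype C] {N : I → Finset K} {r : K → I → ℝ}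
    (hr : ∀ i, ∀ k ∈ N i, 0 ≤ r k i) {Q : I → C → ℝ} (hQ : ∀ i c, 0 ≤ Q i c)
    {p : K → I → C → Fin Ts → ℝ} (hbox : inBox Ts p) : 0 ≤ drift N r Q p :=
  sum_nonneg fun i _ => sum_nonneg fun c _ => mul_nonneg (hQ i c) <|
    sum_nonneg fun τ _ => sum_nonneg fun k hk => mul_nonneg (hr i k hk) (hbox k i c τ).1

theorem drift_le [Fintype K] [Fintype I] [Fintype C] {N : I → Finset K} {r : K → I → ℝ}
    (hr : ∀ i, ∀ k ∈ N i, 0 ≤ r k i ∧ r k i ≤ 1) {Q : I → C → ℝ} {Qmax : ℝ}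
    (hQmax : ∀ i c, Q i c ≤ Qmax) (hQmax₀ : 0 ≤ Qmax) {p : K → I → C → Fin Ts → ℝ} (hbox : inBox Ts p) (hP1 : consP1 N p) :
    drift N r Q p ≤ Qmax * (Fintype.card K * Ts) := by
  calc drift N r Q p ≤ ∑ i, ∑ c, Qmax * ∑ τ, ∑ k ∈ N i, p k i c τ := by
        refine sum_le_sum fun i _ => sum_le_sum fun c _ => ?_
        refine mul_le_mul (hQmax i c) ?_ ?_ hQmax₀
        · refine sum_le_sum fun τ _ => sum_le_sum fun k hk => ?_
          exact mul_le_of_le_one_left (hbox k i c τ).1 (hr i k hk).2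
        · exact sum_nonneg fun τ _ => sum_nonneg fun k hk =>
            mul_nonneg (hr i k hk).1 (hbox k i c τ).1
    _ = Qmax * (Fintype.card K * Ts) := by simp only [← mul_sum, hP1.sum_eq]

theorem hobj_sub_hobj_le [Fintype K] [Fintype I] [Fintype C] {N : I → Finset K}
    {r : K → I → ℝ} (hr : ∀ i, ∀ k ∈ N i, 0 ≤ r k i ∧ r k i ≤ 1) {Q : I → C → ℝ} {Qmax : ℝ}
    (hQ : ∀ i c, 0 ≤ Q i c) (hQmax : ∀ i c, Q i c ≤ Qmax) (hQmax₀ : 0 ≤ Qmax) {V : ℝ}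
    (hV : 0 ≤ V) {f : (K → I → C → Fin Ts → ℝ) → ℝ} {fmin fmax : ℝ}
    (hf : ∀ p, inBox Ts p → f p ∈ Set.Icc fmin fmax) {p₁ p₂ : K → I → C → Fin Ts → ℝ}
    (hbox₁ : inBox Ts p₁) (hP1 : consP1 N p₁) (hbox₂ : inBox Ts p₂) :
    hobj N r Q V f p₁ - hobj N r Q V f p₂ ≤ Qmax * (Fintype.card K * Ts) + V * (fmax - fmin) := by
  have hdrift₁ := drift_le hr hQmax hQmax₀ hbox₁ hP1
  have hdrift₂ := drift_nonneg (fun i k hk => (hr i k hk).1) hQ hbox₂ (N := N) 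
  have hf₁ := mul_le_mul_of_nonneg_left (hf p₁ hbox₁).2 hV
  have hf₂ := mul_le_mul_of_nonneg_left (hf p₂ hbox₂).1 hV
  rw [hobj_eq_drift_add]
  linarith

end Network

theorem stmt6_general {K I C : Type*} [Fintype K] [Fintype I] [Fintype C]
    [DecidableEq K]
    (N : I → Finset K)
    (Ts : ℕ)
    (r : K → I → ℝ) (hr : ∀ i, ∀ k ∈ N i, 0 < r k i ∧ r k i < 1)
    (U : I → ℝ)
    (γ q : I → C → ℝ)
    -- utility function
    (f : (K → I → C → Fin Ts → ℝ) → ℝ) (fmin fmax : ℝ)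
    (hfconc : ConcaveOn ℝ {p | inBox Ts p} f)
    (hfbdd : ∀ p, inBox Ts p → f p ∈ Set.Icc fmin fmax)
    -- queues and penalty weight
    (Q : I → C → ℝ) (hQ : ∀ i c, 0 ≤ Q i c)
    (Qmax : ℝ) (hQmax : IsGreatest {x : ℝ | ∃ i c, x = Q i c} Qmax)
    (V : ℝ) (hV : 0 < V)
    -- Slater condition (Assumption 1) for D̃(γ, q)
    (ζ : ℝ) (hζ : 0 < ζ)
    (pbar : K → I → C → Fin Ts → ℝ) (hpbar : pbar ∈ Dtilde N Ts r U γ q)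
    (hslater : ∀ i c, 0 < q i c →
      (Fintype.card K : ℝ) * Ts * (γ i c + ζ) ≤
        (∑ k ∈ N i, ∑ τ : Fin Ts, r k i * pbar k i c τ) - Bci N r q pbar i c)
    -- the perturbed parameter vector
    (γ' : I → C → ℝ)
    -- maximizers
    (p' : K → I → C → Fin Ts → ℝ) (hp' : p' ∈ Dtilde N Ts r U γ' q)
    (pMDP : K → I → C → Fin Ts → ℝ)
    (hpMDPmax : ∀ p ∈ Dtilde N Ts r U γ q, hobj N r Q V f p ≤ hobj N r Q V f pMDP) :
    hobj N r Q V f p' - hobj N r Q V f pMDP ≤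
      (Qmax * (Fintype.card K : ℝ) * Ts / ζ + V * (fmax - fmin) / ζ) *
        ∑ ic : I × C, (if 0 < q ic.1 ic.2 then |γ' ic.1 ic.2 - γ ic.1 ic.2| else 0) := by
  have hQle : ∀ i c, Q i c ≤ Qmax := fun i c => hQmax.2 ⟨i, c, rfl⟩
  have hQmax₀ : 0 ≤ Qmax := by
    obtain ⟨i, c, rfl⟩ := hQmax.1
    exact hQ i c
  set Δ := ∑ ic : I × C, (if 0 < q ic.1 ic.2 then |γ' ic.1 ic.2 - γ ic.1 ic.2| else 0)
  have hΔ₀ : 0 ≤ Δ := by positivity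
  set t := Δ / (Δ + ζ)
  have ht₀ : 0 ≤ t := by positivity
  have ht₁ : t ≤ 1 := (div_le_one (by positivity)).2 (by linarith)
  have hmix : (1 - t) • p' + t • pbar ∈ Dtilde N Ts r U γ q :=
    convex_combo_mem_Dtilde_of_slack
      (fun i c hq => sub_le_sum_ite_abs (fun ic : I × C => γ' ic.1 ic.2)
        (fun ic => γ ic.1 ic.2) (a := (i, c)) hq)
      ht₀ ht₁ (div_mul_cancel₀ _ (by positivity)) hp'
      ⟨hpbar.1, hpbar.2.1, hpbar.2.2.1, hslater⟩
  have hconc : (1 - t) * hobj N r Q V f p' + t * hobj N r Q V f pbar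
      ≤ hobj N r Q V f ((1 - t) • p' + t • pbar) :=
    (concaveOn_hobj N r Q hV.le hfconc).2 hp'.1 hpbar.1 (sub_nonneg.2 ht₁) ht₀ (sub_add_cancel 1 t)
  have hgap := hobj_sub_hobj_le (fun i k hk => ⟨(hr i k hk).1.le, (hr i k hk).2.le⟩) hQ hQle
    hQmax₀ hV.le hfbdd hp'.1 hp'.2.1 hpbar.1
  have hfmin_le : fmin ≤ fmax := (hfbdd pbar hpbar.1).1.trans (hfbdd pbar hpbar.1).2
  calc hobj N r Q V f p' - hobj N r Q V f pMDP
      ≤ t * (hobj N r Q V f p' - hobj N r Q V f pbar) := by linarith [hpMDPmax _ hmix]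
    _ ≤ t * (Qmax * (Fintype.card K * Ts) + V * (fmax - fmin)) := by gcongr
    _ ≤ Δ / ζ * (Qmax * (Fintype.card K * Ts) + V * (fmax - fmin)) := by
        gcongr
        exact div_le_div_of_nonneg_left hΔ₀ hζ (by linarith)
    _ = _ := by ring

/-- **Objective gap under perturbation of the delivery ratios** (Lemma 6).
Under the Slater condition for `D̃(γ, q)`, if `γ' ≤ γ` on `S`, `p'` maximizes
`h` over `D̃(γ', q)` and `p^MDP` maximizes `h` over `D̃(γ, q)`, then
`h(p') − h(p^MDP) ≤ K₃·Σ_{(i,c)∈S} |γ'^c_i − γ^c_i|` with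
`K₃ = ‖Q‖_∞·|K|·T_s/ζ + V·(f_max − f_min)/ζ`. -/
theorem stmt6 {K I C : Type*} [Fintype K] [Fintype I] [Fintype C]
    [Nonempty K] [Nonempty I] [Nonempty C] [DecidableEq K]
    (N : I → Finset K) (hN : ∀ i, (N i).Nonempty)
    (Ts : ℕ) (hTs : 1 ≤ Ts)
    (r : K → I → ℝ) (hr : ∀ i, ∀ k ∈ N i, 0 < r k i ∧ r k i < 1)
    (U : I → ℝ) (hU : ∀ i, 0 < U i)
    (γ q : I → C → ℝ)
    (hγ : ∀ i c, γ i c ∈ Set.Ioo (0 : ℝ) 1) (hq : ∀ i c, q i c ∈ Set.Ico (0 : ℝ) 1)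
    (hfloor : ∀ i c, 0 < q i c →
      Nat.floor (GamQoS (Fintype.card K) Ts (q i c)) + 1 ≤ (N i).card * Ts)
    -- utility function
    (f : (K → I → C → Fin Ts → ℝ) → ℝ) (fmin fmax : ℝ)
    (hfcont : ContinuousOn f {p | inBox Ts p})
    (hfconc : ConcaveOn ℝ {p | inBox Ts p} f)
    (hfbdd : ∀ p, inBox Ts p → f p ∈ Set.Icc fmin fmax)
    -- queues and penalty weight
    (Q : I → C → ℝ) (hQ : ∀ i c, 0 ≤ Q i c)
    (Qmax : ℝ) (hQmax : IsGreatest {x : ℝ | ∃ i c, x = Q i c} Qmax)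
    (V : ℝ) (hV : 0 < V)
    -- Slater condition (Assumption 1) for D̃(γ, q)
    (ζ : ℝ) (hζ : 0 < ζ)
    (pbar : K → I → C → Fin Ts → ℝ) (hpbar : pbar ∈ Dtilde N Ts r U γ q)
    (hslater : ∀ i c, 0 < q i c →
      (Fintype.card K : ℝ) * Ts * (γ i c + ζ) ≤
        (∑ k ∈ N i, ∑ τ : Fin Ts, r k i * pbar k i c τ) - Bci N r q pbar i c)
    -- the perturbed parameter vector
    (γ' : I → C → ℝ) (hγ'le : ∀ i c, 0 < q i c → γ' i c ≤ γ i c)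
    -- maximizers
    (p' : K → I → C → Fin Ts → ℝ) (hp' : p' ∈ Dtilde N Ts r U γ' q)
    (hp'max : ∀ p ∈ Dtilde N Ts r U γ' q, hobj N r Q V f p ≤ hobj N r Q V f p')
    (pMDP : K → I → C → Fin Ts → ℝ) (hpMDP : pMDP ∈ Dtilde N Ts r U γ q)
    (hpMDPmax : ∀ p ∈ Dtilde N Ts r U γ q, hobj N r Q V f p ≤ hobj N r Q V f pMDP) :
    hobj N r Q V f p' - hobj N r Q V f pMDP ≤
      (Qmax * (Fintype.card K : ℝ) * Ts / ζ + V * (fmax - fmin) / ζ) *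
        ∑ ic : I × C, (if 0 < q ic.1 ic.2 then |γ' ic.1 ic.2 - γ ic.1 ic.2| else 0) :=
  stmt6_general N Ts r hr U γ q f fmin fmax hfconc hfbdd Q hQ Qmax hQmax V hV ζ hζ pbar hpbar
    hslater γ' p' hp' pMDP hpMDPmax
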